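/- Let P₁, P₂ ∈ Her_s and Q₁, Q₂ ∈ Her_t be Hermitian matrices with ρ = P₁ ⊗ Q₁ + P₂ ⊗ Q₂ positive semidefinite. Then ρ is separable and admits a separable decomposition with at most two terms: ρ = σ₁ ⊗ τ₁ + σ₂ ⊗ τ₂ with σ_j ∈ PSD_s, τ_j ∈ PSD_t. -/

import Mathlib

open scoped Kronecker ComplexOrder
open Matrix

section Aux

variable {n : ℕ}

private lemma sumsq_zero' {a b : ℝ} (h : a^2 + b^2 = 0) : a = 0 ∧ b = 0 := by
  have h1 : a^2 = 0 := le_antisymm (by nlinarith [sq_nonneg b]) (sq_nonneg a)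
  have h2 : b^2 = 0 := le_antisymm (by nlinarith [sq_nonneg a]) (sq_nonneg b)
  exact ⟨pow_eq_zero_iff two_ne_zero |>.mp h1, pow_eq_zero_iff two_ne_zero |>.mp h2⟩

private lemma herm_form_star' {A : Matrix (Fin n) (Fin n) ℂ} (hA : A.IsHermitian)
    (x : Fin n → ℂ) :
    (starRingEnd ℂ) (star x ⬝ᵥ A *ᵥ x) = star x ⬝ᵥ A *ᵥ x := by
  calc (starRingEnd ℂ) (star x ⬝ᵥ A *ᵥ x) = star (star x ⬝ᵥ A *ᵥ x) := rfl
  _ = star (A *ᵥ x) ⬝ᵥ x := by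
      rw [← star_star (A *ᵥ x), star_dotProduct_star, star_star, star_star]
  _ = (star x ᵥ* A) ⬝ᵥ x := by rw [star_mulVec, hA.eq]
  _ = star x ⬝ᵥ A *ᵥ x := by rw [← dotProduct_mulVec]

private lemma herm_form_im' {A : Matrix (Fin n) (Fin n) ℂ} (hA : A.IsHermitian) (x : Fin n → ℂ) :
    (star x ⬝ᵥ A *ᵥ x).im = 0 :=
  Complex.conj_eq_iff_im.mp (herm_form_star' hA x)

private lemma psd_of_re' {A : Matrix (Fin n) (Fin n) ℂ} (hA : A.IsHermitian)
    (h : ∀ x, 0 ≤ (star x ⬝ᵥ A *ᵥ x).re) : A.PosSemidef := by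
  refine Matrix.PosSemidef.of_dotProduct_mulVec_nonneg hA fun x => ?_
  rw [Complex.nonneg_iff]
  exact ⟨h x, (herm_form_im' hA x).symm⟩

private lemma psd_re_nonneg' {A : Matrix (Fin n) (Fin n) ℂ} (hA : A.PosSemidef) (x : Fin n → ℂ) :
    0 ≤ (star x ⬝ᵥ A *ᵥ x).re :=
  (Complex.nonneg_iff.mp (hA.dotProduct_mulVec_nonneg x)).1

private lemma herm_eq_zero' {A : Matrix (Fin n) (Fin n) ℂ} (hA : A.IsHermitian)
    (h : ∀ x, (star x ⬝ᵥ A *ᵥ x).re = 0) : A = 0 := by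
  have he : hA.eigenvalues = 0 := funext fun i => by
    rw [hA.eigenvalues_eq]; exact h _
  have hs := hA.spectral_theorem
  rw [he] at hs
  have h0 : ((RCLike.ofReal : ℝ → ℂ) ∘ (0 : Fin n → ℝ)) = 0 := by ext; simp
  rw [h0] at hs
  have h1 : diagonal (0 : Fin n → ℂ) = 0 := diagonal_zero
  rw [h1, map_zero] at hs
  exact hs

private lemma psd_exists_pos_form' {A : Matrix (Fin n) (Fin n) ℂ} (hA : A.PosSemidef)
    (hne : A ≠ 0) : ∃ u, 0 < (star u ⬝ᵥ A *ᵥ u).re := by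
  by_contra h
  push_neg at h
  exact hne (herm_eq_zero' hA.1 fun x => le_antisymm (h x) (psd_re_nonneg' hA x))

private lemma herm_smul' {A : Matrix (Fin n) (Fin n) ℂ} (hA : A.IsHermitian) (r : ℝ) :
    ((r : ℂ) • A).IsHermitian := by
  unfold Matrix.IsHermitian
  rw [conjTranspose_smul, hA.eq, Complex.star_def, Complex.conj_ofReal]

private lemma herm_combo' {A B : Matrix (Fin n) (Fin n) ℂ} (hA : A.IsHermitian)
    (hB : B.IsHermitian) (a b : ℝ) : ((a : ℂ) • A + (b : ℂ) • B).IsHermitian :=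
  (herm_smul' hA a).add (herm_smul' hB b)

private lemma form_smul' (A : Matrix (Fin n) (Fin n) ℂ) (a : ℝ) (x : Fin n → ℂ) :
    (star x ⬝ᵥ ((a : ℂ) • A) *ᵥ x).re = a * (star x ⬝ᵥ A *ᵥ x).re := by
  rw [smul_mulVec, dotProduct_smul, smul_eq_mul, Complex.re_ofReal_mul]

private lemma form_combo' (A B : Matrix (Fin n) (Fin n) ℂ) (a b : ℝ) (x : Fin n → ℂ) :
    (star x ⬝ᵥ (((a : ℂ) • A + (b : ℂ) • B) *ᵥ x)).re
      = a * (star x ⬝ᵥ A *ᵥ x).re + b * (star x ⬝ᵥ B *ᵥ x).re := by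
  rw [add_mulVec, dotProduct_add, Complex.add_re, ← form_smul', ← form_smul']

end Aux

section Kron

private lemma kron_quad' {s t : ℕ} (A : Matrix (Fin s) (Fin s) ℂ) (B : Matrix (Fin t) (Fin t) ℂ)
    (u : Fin s → ℂ) (v : Fin t → ℂ) :
    star (fun p : Fin s × Fin t => u p.1 * v p.2) ⬝ᵥ ((A ⊗ₖ B) *ᵥ fun p => u p.1 * v p.2)
      = (star u ⬝ᵥ A *ᵥ u) * (star v ⬝ᵥ B *ᵥ v) := by
  have hw : ∀ (i : Fin s) (j : Fin t),
      ((A ⊗ₖ B) *ᵥ fun p : Fin s × Fin t => u p.1 * v p.2) (i, j)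
        = (A *ᵥ u) i * (B *ᵥ v) j := by
    intro i j
    simp only [mulVec, dotProduct, Fintype.sum_prod_type, kroneckerMap_apply]
    rw [Finset.sum_mul_sum]
    exact Finset.sum_congr rfl fun k _ => Finset.sum_congr rfl fun l _ => by ring
  simp only [dotProduct, Fintype.sum_prod_type, Pi.star_apply, star_mul']
  rw [Finset.sum_mul_sum]
  refine Finset.sum_congr rfl fun i _ => Finset.sum_congr rfl fun j _ => ?_
  rw [hw i j]
  ring

private lemma kron_re_nonneg' {s t : ℕ} {A : Matrix (Fin s) (Fin s) ℂ}
    {B : Matrix (Fin t) (Fin t) ℂ}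
    (hA : A.IsHermitian) (hB : B.IsHermitian) (h : (A ⊗ₖ B).PosSemidef)
    (u : Fin s → ℂ) (v : Fin t → ℂ) :
    0 ≤ (star u ⬝ᵥ A *ᵥ u).re * (star v ⬝ᵥ B *ᵥ v).re := by
  have hq := h.dotProduct_mulVec_nonneg (fun p : Fin s × Fin t => u p.1 * v p.2)
  rw [kron_quad'] at hq
  have := (Complex.nonneg_iff.mp hq).1
  rwa [Complex.mul_re, herm_form_im' hA, herm_form_im' hB, mul_zero, sub_zero] at this

private lemma kron_psd_decomp_aux' {s t : ℕ} {A : Matrix (Fin s) (Fin s) ℂ}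
    {B : Matrix (Fin t) (Fin t) ℂ}
    (hA : A.IsHermitian) (hB : B.IsHermitian) (h : (A ⊗ₖ B).PosSemidef)
    (v : Fin t → ℂ) (hv : 0 < (star v ⬝ᵥ B *ᵥ v).re) :
    ∃ σ τ, σ.PosSemidef ∧ τ.PosSemidef ∧ A ⊗ₖ B = σ ⊗ₖ τ := by
  have hApsd : A.PosSemidef := by
    refine psd_of_re' hA fun u => ?_
    have := kron_re_nonneg' hA hB h u v
    nlinarith
  by_cases hA0 : A = 0
  · exact ⟨0, 0, Matrix.PosSemidef.zero, Matrix.PosSemidef.zero, by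
      rw [hA0, zero_kronecker, zero_kronecker]⟩
  · obtain ⟨u, hu⟩ := psd_exists_pos_form' hApsd hA0
    have hBpsd : B.PosSemidef := by
      refine psd_of_re' hB fun w => ?_
      have := kron_re_nonneg' hA hB h u w
      nlinarith
    exact ⟨A, B, hApsd, hBpsd, rfl⟩

private lemma kron_psd_decomp' {s t : ℕ} {A : Matrix (Fin s) (Fin s) ℂ}
    {B : Matrix (Fin t) (Fin t) ℂ}
    (hA : A.IsHermitian) (hB : B.IsHermitian) (h : (A ⊗ₖ B).PosSemidef) :
    ∃ σ τ, σ.PosSemidef ∧ τ.PosSemidef ∧ A ⊗ₖ B = σ ⊗ₖ τ := by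
  by_cases hB0 : ∀ v, (star v ⬝ᵥ B *ᵥ v).re = 0
  · have hz : B = 0 := herm_eq_zero' hB hB0
    exact ⟨0, 0, Matrix.PosSemidef.zero, Matrix.PosSemidef.zero, by
      rw [hz, kronecker_zero, kronecker_zero]⟩
  · push_neg at hB0
    obtain ⟨v, hv⟩ := hB0
    rcases lt_or_gt_of_ne hv with hneg | hpos
    · have hkn : ((-A) ⊗ₖ (-B)).PosSemidef := by
        rw [show (-A) ⊗ₖ (-B) = A ⊗ₖ B by ext ⟨i, j⟩ ⟨k, l⟩; simp [kroneckerMap_apply]]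
        exact h
      have hv' : 0 < (star v ⬝ᵥ (-B) *ᵥ v).re := by
        rw [neg_mulVec, dotProduct_neg, Complex.neg_re]
        linarith
      obtain ⟨σ, τ, h1, h2, h3⟩ := kron_psd_decomp_aux' hA.neg hB.neg hkn v hv'
      refine ⟨σ, τ, h1, h2, ?_⟩
      rw [← h3]
      ext ⟨i, j⟩ ⟨k, l⟩; simp [kroneckerMap_apply]
    · exact kron_psd_decomp_aux' hA hB h v hpos

end Kron

section Cone

private lemma alg1' {a b c : ℝ} (ha : 0 ≤ a) (hb : b < 0) (hc1 : -1 < c) (hc2 : c < 1)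
    (hu : a^2 + b^2 + 2*a*b*c = 1) : a*c + b < c := by
  by_contra h
  push_neg at h
  have key : a^2*(1-c^2) = 1 - (a*c+b)^2 := by linear_combination hu
  have h1 : 0 < 1 - c^2 := by nlinarith
  rcases lt_trichotomy c 0 with hc | hc | hc
  · have hu0 : a*c + b < 0 := by nlinarith
    rcases eq_or_lt_of_le ha with ha0 | ha0
    · have hb2 : b^2 = 1 := by nlinarith
      have hb1 : b = -1 := by nlinarith [sq_nonneg (b+1)]
      nlinarith
    · have hA1 : a < 1 := by nlinarith
      have h2 : a^2 < 1 := by nlinarith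
      have h3 : a^2*(1-c^2) < 1-c^2 := by nlinarith
      have h4 : (a*c+b)^2 ≤ c^2 := by
        nlinarith [mul_nonneg (sub_nonneg.2 h) (show (0:ℝ) ≤ -(a*c+b+c) by linarith)]
      linarith
  · nlinarith
  · have ha1 : 1 < a := by nlinarith
    have h2 : 1 < a^2 := by nlinarith
    have h3 : 1 - c^2 < a^2*(1-c^2) := by nlinarith
    have h4 : c^2 ≤ (a*c+b)^2 := by
      nlinarith [mul_nonneg (sub_nonneg.2 h) (show (0:ℝ) ≤ a*c+b+c by linarith)]
    linarith

private lemma cone2' (D : Set (ℝ × ℝ)) (hclosed : IsClosed D)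
    (hadd : ∀ x ∈ D, ∀ y ∈ D, x + y ∈ D)
    (hcone : ∀ (c : ℝ), 0 ≤ c → ∀ x ∈ D, c • x ∈ D)
    (hpointed : ∀ x ∈ D, -x ∈ D → x = 0)
    {x y : ℝ × ℝ} (hx : x ∈ D) (hy : y ∈ D) (hindep : x.1 * y.2 - x.2 * y.1 ≠ 0) :
    ∃ s₁ s₂, s₁ ∈ D ∧ s₂ ∈ D ∧ s₁.1 * s₂.2 - s₁.2 * s₂.1 ≠ 0 ∧
      ∀ z ∈ D, ∃ a b : ℝ, 0 ≤ a ∧ 0 ≤ b ∧ z = a • s₁ + b • s₂ := by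
  classical
  have hnorm : ∀ z ∈ D, z ≠ 0 →
      ∃ w, (w ∈ D ∧ w.1^2 + w.2^2 = 1) ∧ ∃ r : ℝ, 0 < r ∧ z = r • w := by
    intro z hz hz0
    have hzz : 0 < z.1^2 + z.2^2 := by
      rcases lt_or_eq_of_le (by positivity : (0:ℝ) ≤ z.1^2 + z.2^2) with h | h
      · exact h
      · exact absurd (Prod.ext (sumsq_zero' h.symm).1 (sumsq_zero' h.symm).2) hz0
    obtain ⟨r, hr, hr2⟩ : ∃ r : ℝ, 0 < r ∧ r^2 = z.1^2 + z.2^2 :=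
      ⟨Real.sqrt _, Real.sqrt_pos.mpr hzz, Real.sq_sqrt hzz.le⟩
    refine ⟨(1/r) • z, ⟨hcone _ (by positivity) z hz, ?_⟩, r, hr, ?_⟩
    · rw [Prod.smul_fst, Prod.smul_snd, smul_eq_mul, smul_eq_mul]
      field_simp
      linarith [hr2]
    · rw [smul_smul, mul_one_div, div_self hr.ne', one_smul]
  set C : Set (ℝ × ℝ) := {w | w ∈ D ∧ w.1^2 + w.2^2 = 1} with hCdef
  have hCcl : IsClosed C := by
    have hCeq : C = D ∩ {w : ℝ × ℝ | w.1^2 + w.2^2 = 1} := rfl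
    rw [hCeq]
    exact hclosed.inter (isClosed_eq (by fun_prop) continuous_const)
  have hCbd : Bornology.IsBounded C := by
    apply (Metric.isBounded_closedBall (x := (0 : ℝ × ℝ)) (r := 1)).subset
    rintro z ⟨-, hz2⟩
    simp only [Metric.mem_closedBall, dist_zero_right, Prod.norm_def, max_le_iff,
      Real.norm_eq_abs]
    constructor <;>
    · by_contra hgt
      push_neg at hgt
      nlinarith [sq_abs z.1, sq_abs z.2, sq_nonneg z.1, sq_nonneg z.2,
        abs_nonneg z.1, abs_nonneg z.2]
  have hCcomp : IsCompact C := Metric.isCompact_of_isClosed_isBounded hCcl hCbd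
  have hx0 : x ≠ 0 := by rintro rfl; simp at hindep
  have hy0 : y ≠ 0 := by rintro rfl; simp at hindep
  obtain ⟨xh, hxhC, rx, hrx, hxeq⟩ := hnorm x hx hx0
  obtain ⟨yh, hyhC, ry, hry, hyeq⟩ := hnorm y hy hy0
  have ux : xh.1^2 + xh.2^2 = 1 := hxhC.2
  have uy : yh.1^2 + yh.2^2 = 1 := hyhC.2
  have hxyh : xh.1 * yh.2 - xh.2 * yh.1 ≠ 0 := by
    intro h
    apply hindep
    rw [hxeq, hyeq]
    simp only [Prod.smul_fst, Prod.smul_snd, smul_eq_mul]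
    linear_combination (rx * ry) * h
  have hprod : IsCompact (C ×ˢ C) := hCcomp.prod hCcomp
  have hne : ((xh, yh) : (ℝ×ℝ) × (ℝ×ℝ)) ∈ C ×ˢ C := Set.mk_mem_prod hxhC hyhC
  obtain ⟨p, hpC, hpmin⟩ := hprod.exists_isMinOn ⟨_, hne⟩
    (Continuous.continuousOn
      (f := fun q : (ℝ×ℝ)×(ℝ×ℝ) => q.1.1*q.2.1 + q.1.2*q.2.2) (by fun_prop))
  obtain ⟨c₁, c₂⟩ := p
  have hc₁C : c₁ ∈ C := hpC.1
  have hc₂C : c₂ ∈ C := hpC.2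
  have hc₁D : c₁ ∈ D := hc₁C.1
  have hc₂D : c₂ ∈ D := hc₂C.1
  have u₁ : c₁.1^2 + c₁.2^2 = 1 := hc₁C.2
  have u₂ : c₂.1^2 + c₂.2^2 = 1 := hc₂C.2
  have hmin : ∀ w₁ ∈ C, ∀ w₂ ∈ C,
      c₁.1*c₂.1 + c₁.2*c₂.2 ≤ w₁.1*w₂.1 + w₁.2*w₂.2 := by
    intro w₁ hw₁ w₂ hw₂
    exact isMinOn_iff.mp hpmin (w₁, w₂) (Set.mk_mem_prod hw₁ hw₂)
  have hc1 : -1 < c₁.1*c₂.1 + c₁.2*c₂.2 := by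
    rcases lt_or_eq_of_le (show -1 ≤ c₁.1*c₂.1 + c₁.2*c₂.2 by
      nlinarith [sq_nonneg (c₁.1+c₂.1), sq_nonneg (c₁.2+c₂.2)]) with h | h
    · exact h
    · exfalso
      have hs : (c₁.1+c₂.1)^2 + (c₁.2+c₂.2)^2 = 0 := by nlinarith
      obtain ⟨h1, h2⟩ := sumsq_zero' hs
      have hneg : -c₁ = c₂ := by
        apply Prod.ext <;> simp only [Prod.fst_neg, Prod.snd_neg] <;> linarith
      have hz := hpointed c₁ hc₁D (hneg ▸ hc₂D)
      rw [hz] at u₁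
      norm_num at u₁
  have hexy : xh.1*yh.1 + xh.2*yh.2 < 1 := by
    rcases lt_or_eq_of_le (show xh.1*yh.1 + xh.2*yh.2 ≤ 1 by
      nlinarith [sq_nonneg (xh.1-yh.1), sq_nonneg (xh.2-yh.2)]) with h | h
    · exact h
    · exfalso
      have hs : (xh.1-yh.1)^2 + (xh.2-yh.2)^2 = 0 := by nlinarith
      obtain ⟨h1, h2⟩ := sumsq_zero' hs
      apply hxyh
      have e1 : xh.1 = yh.1 := by linarith
      have e2 : xh.2 = yh.2 := by linarith
      rw [e1, e2]
      ring
  have hc2 : c₁.1*c₂.1 + c₁.2*c₂.2 < 1 := lt_of_le_of_lt (hmin xh hxhC yh hyhC) hexy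
  have hΔsq : (c₁.1*c₂.2 - c₁.2*c₂.1)^2 = 1 - (c₁.1*c₂.1 + c₁.2*c₂.2)^2 := by
    linear_combination (c₁.1^2 + c₁.2^2) * u₂ + u₁
  have hΔ : c₁.1*c₂.2 - c₁.2*c₂.1 ≠ 0 := by
    intro h
    rw [h] at hΔsq
    nlinarith
  refine ⟨c₁, c₂, hc₁D, hc₂D, hΔ, ?_⟩
  intro z hz
  by_cases hz0 : z = 0
  · exact ⟨0, 0, le_refl _, le_refl _, by simp [hz0]⟩
  obtain ⟨w, hwC, r, hr, hzeq⟩ := hnorm z hz hz0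
  have hwu : w.1^2 + w.2^2 = 1 := hwC.2
  obtain ⟨a, b, e1, e2⟩ : ∃ a b : ℝ, w.1 = a*c₁.1 + b*c₂.1 ∧ w.2 = a*c₁.2 + b*c₂.2 := by
    refine ⟨(w.1*c₂.2 - w.2*c₂.1)/(c₁.1*c₂.2 - c₁.2*c₂.1),
      (c₁.1*w.2 - c₁.2*w.1)/(c₁.1*c₂.2 - c₁.2*c₂.1), ?_, ?_⟩ <;>
    · rw [div_mul_eq_mul_div, div_mul_eq_mul_div, ← add_div, eq_div_iff hΔ]
      ring
  have hab : a^2 + b^2 + 2*a*b*(c₁.1*c₂.1 + c₁.2*c₂.2) = 1 := by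
    rw [e1, e2] at hwu
    linear_combination hwu - a^2*u₁ - b^2*u₂
  have hrep : w = a • c₁ + b • c₂ := by
    apply Prod.ext <;>
      simp only [Prod.fst_add, Prod.snd_add, Prod.smul_fst, Prod.smul_snd, smul_eq_mul]
    · exact e1
    · exact e2
  rcases le_or_gt 0 a with ha | ha <;> rcases le_or_gt 0 b with hb | hb
  · refine ⟨r*a, r*b, mul_nonneg hr.le ha, mul_nonneg hr.le hb, ?_⟩
    rw [hzeq, hrep, smul_add, smul_smul, smul_smul]
  · exfalso
    have hfw : w.1*c₂.1 + w.2*c₂.2 = a*(c₁.1*c₂.1 + c₁.2*c₂.2) + b := by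
      rw [e1, e2]
      linear_combination b * u₂
    have hge := hmin w hwC c₂ hc₂C
    rw [hfw] at hge
    exact absurd hge (not_le.mpr (alg1' ha hb hc1 hc2 hab))
  · exfalso
    have hfw : c₁.1*w.1 + c₁.2*w.2 = b*(c₁.1*c₂.1 + c₁.2*c₂.2) + a := by
      rw [e1, e2]
      linear_combination a * u₁
    have hge := hmin c₁ hc₁C w hwC
    rw [hfw] at hge
    exact absurd hge (not_le.mpr (alg1' hb ha hc1 hc2 (by linarith [hab])))
  · exfalso
    have hnw : -w ∈ D := by
      have h1 : (-a) • c₁ ∈ D := hcone _ (by linarith) _ hc₁D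
      have h2 : (-b) • c₂ ∈ D := hcone _ (by linarith) _ hc₂D
      have h3 := hadd _ h1 _ h2
      have heq : (-a) • c₁ + (-b) • c₂ = -w := by rw [hrep]; module
      rwa [heq] at h3
    have hz' := hpointed w hwC.1 hnw
    rw [hz'] at hwu
    norm_num at hwu

end Cone

theorem stmt_8 (s t : ℕ)
    (P₁ P₂ : Matrix (Fin s) (Fin s) ℂ) (Q₁ Q₂ : Matrix (Fin t) (Fin t) ℂ)
    (hP₁ : P₁.IsHermitian) (hP₂ : P₂.IsHermitian)
    (hQ₁ : Q₁.IsHermitian) (hQ₂ : Q₂.IsHermitian)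
    (hρ : (P₁ ⊗ₖ Q₁ + P₂ ⊗ₖ Q₂).PosSemidef) :
    ∃ (σ₁ σ₂ : Matrix (Fin s) (Fin s) ℂ) (τ₁ τ₂ : Matrix (Fin t) (Fin t) ℂ),
      σ₁.PosSemidef ∧ σ₂.PosSemidef ∧ τ₁.PosSemidef ∧ τ₂.PosSemidef ∧
      P₁ ⊗ₖ Q₁ + P₂ ⊗ₖ Q₂ = σ₁ ⊗ₖ τ₁ + σ₂ ⊗ₖ τ₂ := by
  classical
  -- Case 1: Q₁, Q₂ are (real-)linearly dependent.
  by_cases hQind : ∀ a b : ℝ, (a:ℂ) • Q₁ + (b:ℂ) • Q₂ = 0 → a = 0 ∧ b = 0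
  swap
  · push_neg at hQind
    obtain ⟨a, b, hcombo, hab⟩ := hQind
    by_cases hb : b = 0
    · subst hb
      have ha : a ≠ 0 := fun h => hab h rfl
      have hQ10 : Q₁ = 0 := by
        have h0 : (a:ℂ) • Q₁ = 0 := by simpa using hcombo
        rcases smul_eq_zero.mp h0 with h | h
        · exact absurd (Complex.ofReal_eq_zero.mp h) ha
        · exact h
      have hρ' : (P₂ ⊗ₖ Q₂).PosSemidef := by
        have he : P₁ ⊗ₖ Q₁ + P₂ ⊗ₖ Q₂ = P₂ ⊗ₖ Q₂ := by
          rw [hQ10, kronecker_zero, zero_add]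
        rwa [he] at hρ
      obtain ⟨σ, τ, h1, h2, h3⟩ := kron_psd_decomp' hP₂ hQ₂ hρ'
      exact ⟨σ, 0, τ, 0, h1, Matrix.PosSemidef.zero, h2, Matrix.PosSemidef.zero, by
        rw [hQ10, kronecker_zero, zero_add, h3, zero_kronecker, add_zero]⟩
    · -- Q₂ = μ • Q₁
      have hbC : (b:ℂ) ≠ 0 := Complex.ofReal_ne_zero.mpr hb
      have hkey : (P₁ + ((-(a/b) : ℝ) : ℂ) • P₂) ⊗ₖ Q₁ = P₁ ⊗ₖ Q₁ + P₂ ⊗ₖ Q₂ := by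
        ext ⟨i, j⟩ ⟨k, l⟩
        have hent : (a:ℂ) * Q₁ j l + (b:ℂ) * Q₂ j l = 0 := by
          have hc := congrFun (congrFun hcombo j) l
          simpa using hc
        have hq : Q₂ j l = ((-(a/b) : ℝ) : ℂ) * Q₁ j l := by
          push_cast
          field_simp
          linear_combination hent
        simp only [kroneckerMap_apply, Matrix.add_apply, Matrix.smul_apply, smul_eq_mul]
        rw [hq]
        ring
      have hρ' : ((P₁ + ((-(a/b) : ℝ) : ℂ) • P₂) ⊗ₖ Q₁).PosSemidef := by rwa [hkey]
      have hAh : (P₁ + ((-(a/b) : ℝ) : ℂ) • P₂).IsHermitian :=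
        hP₁.add (herm_smul' hP₂ _)
      obtain ⟨σ, τ, h1, h2, h3⟩ := kron_psd_decomp' hAh hQ₁ hρ'
      exact ⟨σ, 0, τ, 0, h1, Matrix.PosSemidef.zero, h2, Matrix.PosSemidef.zero, by
        rw [← hkey, h3, zero_kronecker, add_zero]⟩
  -- Case 2: P₁, P₂ are (real-)linearly dependent.
  by_cases hPind : ∀ a b : ℝ, (a:ℂ) • P₁ + (b:ℂ) • P₂ = 0 → a = 0 ∧ b = 0
  swap
  · push_neg at hPind
    obtain ⟨a, b, hcombo, hab⟩ := hPind
    by_cases hb : b = 0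
    · subst hb
      have ha : a ≠ 0 := fun h => hab h rfl
      have hP10 : P₁ = 0 := by
        have h0 : (a:ℂ) • P₁ = 0 := by simpa using hcombo
        rcases smul_eq_zero.mp h0 with h | h
        · exact absurd (Complex.ofReal_eq_zero.mp h) ha
        · exact h
      have hρ' : (P₂ ⊗ₖ Q₂).PosSemidef := by
        have he : P₁ ⊗ₖ Q₁ + P₂ ⊗ₖ Q₂ = P₂ ⊗ₖ Q₂ := by
          rw [hP10, zero_kronecker, zero_add]
        rwa [he] at hρ
      obtain ⟨σ, τ, h1, h2, h3⟩ := kron_psd_decomp' hP₂ hQ₂ hρ'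
      exact ⟨σ, 0, τ, 0, h1, Matrix.PosSemidef.zero, h2, Matrix.PosSemidef.zero, by
        rw [hP10, zero_kronecker, zero_add, h3, zero_kronecker, add_zero]⟩
    · have hbC : (b:ℂ) ≠ 0 := Complex.ofReal_ne_zero.mpr hb
      have hkey : P₁ ⊗ₖ (Q₁ + ((-(a/b) : ℝ) : ℂ) • Q₂) = P₁ ⊗ₖ Q₁ + P₂ ⊗ₖ Q₂ := by
        ext ⟨i, j⟩ ⟨k, l⟩
        have hent : (a:ℂ) * P₁ i k + (b:ℂ) * P₂ i k = 0 := by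
          have hc := congrFun (congrFun hcombo i) k
          simpa using hc
        have hq : P₂ i k = ((-(a/b) : ℝ) : ℂ) * P₁ i k := by
          push_cast
          field_simp
          linear_combination hent
        simp only [kroneckerMap_apply, Matrix.add_apply, Matrix.smul_apply, smul_eq_mul]
        rw [hq]
        ring
      have hρ' : (P₁ ⊗ₖ (Q₁ + ((-(a/b) : ℝ) : ℂ) • Q₂)).PosSemidef := by rwa [hkey]
      have hBh : (Q₁ + ((-(a/b) : ℝ) : ℂ) • Q₂).IsHermitian :=
        hQ₁.add (herm_smul' hQ₂ _)
      obtain ⟨σ, τ, h1, h2, h3⟩ := kron_psd_decomp' hP₁ hBh hρ'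
      exact ⟨σ, 0, τ, 0, h1, Matrix.PosSemidef.zero, h2, Matrix.PosSemidef.zero, by
        rw [← hkey, h3, zero_kronecker, add_zero]⟩
  -- Main case: both pairs linearly independent.
  -- The cone of PSD real combinations of P₁, P₂.
  set D : Set (ℝ × ℝ) := {z | (((z.1:ℂ) • P₁ + (z.2:ℂ) • P₂)).PosSemidef} with hDdef
  have hmemD : ∀ z : ℝ × ℝ, z ∈ D ↔ (((z.1:ℂ) • P₁ + (z.2:ℂ) • P₂)).PosSemidef := fun z =>
    Iff.rfl
  have hDclosed : IsClosed D := by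
    have hDeq : D = ⋂ u : Fin s → ℂ,
        {z : ℝ×ℝ | 0 ≤ z.1 * (star u ⬝ᵥ P₁ *ᵥ u).re + z.2 * (star u ⬝ᵥ P₂ *ᵥ u).re} := by
      ext z
      simp only [Set.mem_iInter, Set.mem_setOf_eq, hDdef]
      constructor
      · intro h u
        have := psd_re_nonneg' h u
        rwa [form_combo'] at this
      · intro h
        exact psd_of_re' (herm_combo' hP₁ hP₂ _ _) fun u => by
          rw [form_combo']; exact h u
    rw [hDeq]
    exact isClosed_iInter fun u => isClosed_le continuous_const (by fun_prop)
  have hDadd : ∀ x ∈ D, ∀ y ∈ D, x + y ∈ D := by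
    intro x hx y hy
    rw [hmemD] at hx hy ⊢
    have he : (((x+y).1:ℂ) • P₁ + ((x+y).2:ℂ) • P₂)
        = ((x.1:ℂ) • P₁ + (x.2:ℂ) • P₂) + ((y.1:ℂ) • P₁ + (y.2:ℂ) • P₂) := by
      rw [Prod.fst_add, Prod.snd_add]
      push_cast
      rw [add_smul, add_smul]
      abel
    rw [he]
    exact hx.add hy
  have hDcone : ∀ (c : ℝ), 0 ≤ c → ∀ x ∈ D, c • x ∈ D := by
    intro c hc x hx
    rw [hmemD] at hx ⊢
    have he : (((c • x).1:ℂ) • P₁ + ((c • x).2:ℂ) • P₂)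
        = (c:ℂ) • ((x.1:ℂ) • P₁ + (x.2:ℂ) • P₂) := by
      rw [Prod.smul_fst, Prod.smul_snd, smul_eq_mul, smul_eq_mul]
      push_cast
      rw [smul_add, smul_smul, smul_smul]
    rw [he]
    refine psd_of_re' (herm_smul' hx.1 c) fun u => ?_
    rw [form_smul']
    exact mul_nonneg hc (psd_re_nonneg' hx u)
  have hDpointed : ∀ x ∈ D, -x ∈ D → x = 0 := by
    intro x hx hnx
    rw [hmemD] at hx hnx
    have he : (((-x).1:ℂ) • P₁ + ((-x).2:ℂ) • P₂)
        = -((x.1:ℂ) • P₁ + (x.2:ℂ) • P₂) := by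
      rw [Prod.fst_neg, Prod.snd_neg]
      push_cast
      rw [neg_smul, neg_smul, neg_add]
    rw [he] at hnx
    have hzero : ((x.1:ℂ) • P₁ + (x.2:ℂ) • P₂) = 0 := by
      apply herm_eq_zero' hx.1
      intro u
      have h1 := psd_re_nonneg' hx u
      have h2 := psd_re_nonneg' hnx u
      rw [neg_mulVec, dotProduct_neg, Complex.neg_re] at h2
      linarith
    have := hPind x.1 x.2 hzero
    exact Prod.ext this.1 this.2
  -- compression inequality
  have hcomp : ∀ (u : Fin s → ℂ) (v : Fin t → ℂ),
      0 ≤ (star u ⬝ᵥ P₁ *ᵥ u).re * (star v ⬝ᵥ Q₁ *ᵥ v).re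
        + (star u ⬝ᵥ P₂ *ᵥ u).re * (star v ⬝ᵥ Q₂ *ᵥ v).re := by
    intro u v
    have h0 := hρ.dotProduct_mulVec_nonneg (fun p : Fin s × Fin t => u p.1 * v p.2)
    rw [add_mulVec, dotProduct_add, kron_quad', kron_quad'] at h0
    have h1 := (Complex.nonneg_iff.mp h0).1
    rwa [Complex.add_re, Complex.mul_re, Complex.mul_re, herm_form_im' hP₁,
      herm_form_im' hP₂, zero_mul, zero_mul, sub_zero, sub_zero] at h1
  -- the Q-quadratic-form points lie in D
  have hqD : ∀ v : Fin t → ℂ,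
      ((star v ⬝ᵥ Q₁ *ᵥ v).re, (star v ⬝ᵥ Q₂ *ᵥ v).re) ∈ D := by
    intro v
    rw [hmemD]
    refine psd_of_re' (herm_combo' hP₁ hP₂ _ _) fun u => ?_
    rw [form_combo']
    have h := hcomp u v
    linarith [mul_comm ((star u ⬝ᵥ P₁ *ᵥ u).re) ((star v ⬝ᵥ Q₁ *ᵥ v).re),
      mul_comm ((star u ⬝ᵥ P₂ *ᵥ u).re) ((star v ⬝ᵥ Q₂ *ᵥ v).re)]
  -- there exist two independent Q-form points
  have hex : ∃ v₀ v₁ : Fin t → ℂ,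
      (star v₀ ⬝ᵥ Q₁ *ᵥ v₀).re * (star v₁ ⬝ᵥ Q₂ *ᵥ v₁).re
        - (star v₀ ⬝ᵥ Q₂ *ᵥ v₀).re * (star v₁ ⬝ᵥ Q₁ *ᵥ v₁).re ≠ 0 := by
    by_contra hall
    push_neg at hall
    by_cases hq0 : ∀ v : Fin t → ℂ, (star v ⬝ᵥ Q₁ *ᵥ v).re = 0 ∧ (star v ⬝ᵥ Q₂ *ᵥ v).re = 0
    · have hQ10 : Q₁ = 0 := herm_eq_zero' hQ₁ fun v => (hq0 v).1
      have := hQind 1 0 (by rw [hQ10]; simp)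
      exact one_ne_zero this.1
    · push_neg at hq0
      obtain ⟨v₀, hv₀⟩ := hq0
      have hN : ((-(star v₀ ⬝ᵥ Q₂ *ᵥ v₀).re : ℝ):ℂ) • Q₁
          + (((star v₀ ⬝ᵥ Q₁ *ᵥ v₀).re : ℝ):ℂ) • Q₂ = 0 := by
        apply herm_eq_zero' (herm_combo' hQ₁ hQ₂ _ _)
        intro v
        rw [form_combo']
        linear_combination hall v₀ v
      have hres := hQind _ _ hN
      exact hv₀ hres.2 (by linarith [hres.1])
  obtain ⟨v₀, v₁, hcross⟩ := hex
  obtain ⟨s₁, s₂, hs₁D, hs₂D, hΔ, hgen⟩ :=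
    cone2' D hDclosed hDadd hDcone hDpointed (hqD v₀) (hqD v₁) hcross
  rw [hmemD] at hs₁D hs₂D
  -- the decomposition
  have hΔC : (s₁.1:ℂ) * (s₂.2:ℂ) - (s₁.2:ℂ) * (s₂.1:ℂ) ≠ 0 := by
    intro h
    apply hΔ
    exact_mod_cast h
  refine ⟨(s₁.1:ℂ) • P₁ + (s₁.2:ℂ) • P₂, (s₂.1:ℂ) • P₁ + (s₂.2:ℂ) • P₂,
    ((s₂.2/(s₁.1*s₂.2 - s₁.2*s₂.1) : ℝ):ℂ) • Q₁ + ((-s₂.1/(s₁.1*s₂.2 - s₁.2*s₂.1) : ℝ):ℂ) • Q₂,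
    ((-s₁.2/(s₁.1*s₂.2 - s₁.2*s₂.1) : ℝ):ℂ) • Q₁ + ((s₁.1/(s₁.1*s₂.2 - s₁.2*s₂.1) : ℝ):ℂ) • Q₂,
    hs₁D, hs₂D, ?_, ?_, ?_⟩
  · refine psd_of_re' (herm_combo' hQ₁ hQ₂ _ _) fun v => ?_
    rw [form_combo']
    obtain ⟨a, b, ha, hb, habz⟩ := hgen _ (hqD v)
    have e1 : (star v ⬝ᵥ Q₁ *ᵥ v).re = a * s₁.1 + b * s₂.1 := by
      have := congrArg Prod.fst habz
      simpa using this
    have e2 : (star v ⬝ᵥ Q₂ *ᵥ v).re = a * s₁.2 + b * s₂.2 := by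
      have := congrArg Prod.snd habz
      simpa using this
    have hval : s₂.2/(s₁.1*s₂.2 - s₁.2*s₂.1) * (star v ⬝ᵥ Q₁ *ᵥ v).re
        + (-s₂.1/(s₁.1*s₂.2 - s₁.2*s₂.1)) * (star v ⬝ᵥ Q₂ *ᵥ v).re = a := by
      rw [e1, e2]
      rw [div_mul_eq_mul_div, div_mul_eq_mul_div, ← add_div, div_eq_iff hΔ]
      ring
    rw [hval]
    exact ha
  · refine psd_of_re' (herm_combo' hQ₁ hQ₂ _ _) fun v => ?_
    rw [form_combo']
    obtain ⟨a, b, ha, hb, habz⟩ := hgen _ (hqD v)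
    have e1 : (star v ⬝ᵥ Q₁ *ᵥ v).re = a * s₁.1 + b * s₂.1 := by
      have := congrArg Prod.fst habz
      simpa using this
    have e2 : (star v ⬝ᵥ Q₂ *ᵥ v).re = a * s₁.2 + b * s₂.2 := by
      have := congrArg Prod.snd habz
      simpa using this
    have hval : -s₁.2/(s₁.1*s₂.2 - s₁.2*s₂.1) * (star v ⬝ᵥ Q₁ *ᵥ v).re
        + (s₁.1/(s₁.1*s₂.2 - s₁.2*s₂.1)) * (star v ⬝ᵥ Q₂ *ᵥ v).re = b := by
      rw [e1, e2]
      field_simp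
      ring
    rw [hval]
    exact hb
  · ext ⟨i, j⟩ ⟨k, l⟩
    simp only [Matrix.add_apply, kroneckerMap_apply, Matrix.smul_apply, smul_eq_mul]
    push_cast
    field_simp
    ring
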